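/- arXiv:1811.12219 — 6 statements merged into one kernel-verified Lean document; each statement's English description precedes it below -/
import Mathlib

section
/- Suppose Λ ≠ F (Λ is a proper additive subgroup of F). If q is a sesquilinear form on E with q(v,v) ∈ Λ for all v ∈ E, then ω_q(v,w) = 0 for all v,w ∈ E. (Hence the assignment q ↦ Q_q on Sesq_σ(E)/X(E,σ,ε,Λ) is injective: ω_q is determined by Q_q.) -/
/-! Polarizing `q (b • v + w) (b • v + w) ∈ Λ` gives `σ b * q v w + q w v * b ∈ Λ`; subtracting
the element `σ b * q v w - ε * σ (σ b * q v w)` of `Λ_min` leaves `b * ω_q(w, v)` (`sesqOmega`).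
So the whole line `F ∙ ω_q(w, v)` lies in the proper subgroup `Λ`, which forces `ω_q(w, v) = 0`. -/

/-- A sesquilinear form with respect to the involution `σ`:
biadditive and `q (a • v) (b • w) = σ a * q v w * b`. -/
def IsSesq {F E : Type*} [Field F] [AddCommGroup E] [Module F E]
    (σ : F →+* F) (q : E → E → F) : Prop :=
  (∀ v v' w : E, q (v + v') w = q v w + q v' w) ∧
  (∀ v w w' : E, q v (w + w') = q v w + q v w') ∧
  ∀ (a b : F) (v w : E), q (a • v) (b • w) = σ a * q v w * b

def sesqOmega {F E : Type*} [Semiring F] (σ : F →+* F) (ε : F) (q : E → E → F) (v w : E) : F :=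
  q v w + ε * σ (q w v)

theorem AddSubgroup.eq_zero_of_forall_mul_mem {F : Type*} [DivisionRing F] {Λ : AddSubgroup F}
    (hΛ : Λ ≠ ⊤) {d : F} (hd : ∀ b : F, b * d ∈ Λ) : d = 0 := by
  by_contra hd0
  refine hΛ ((AddSubgroup.eq_top_iff' Λ).mpr fun t => ?_)
  simpa [hd0] using hd (t / d)

namespace IsSesq

variable {F E : Type*} [Field F] [AddCommGroup E] [Module F E] {σ : F →+* F} {q : E → E → F}

theorem smul_left (hq : IsSesq σ q) (a : F) (v w : E) : q (a • v) w = σ a * q v w := by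
  simpa using hq.2.2 a 1 v w

theorem smul_right (hq : IsSesq σ q) (b : F) (v w : E) : q v (b • w) = q v w * b := by
  simpa using hq.2.2 1 b v w

theorem apply_add_add (hq : IsSesq σ q) (v w : E) :
    q (v + w) (v + w) = q v v + (q v w + q w v) + q w w := by
  rw [hq.1, hq.2.1, hq.2.1]
  ring

theorem add_swap_mem {Λ : AddSubgroup F} (hq : IsSesq σ q) (hQ : ∀ v : E, q v v ∈ Λ) (v w : E) :
    q v w + q w v ∈ Λ := by
  have h := Λ.sub_mem (Λ.sub_mem (hQ (v + w)) (hQ v)) (hQ w)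
  rw [hq.apply_add_add] at h
  convert h using 1
  ring

theorem mul_sesqOmega_mem {Λ : AddSubgroup F} (hq : IsSesq σ q) (hσ : ∀ a : F, σ (σ a) = a) {ε : F}
    (hmin : ∀ a : F, a - ε * σ a ∈ Λ) (hQ : ∀ v : E, q v v ∈ Λ) (v w : E) (b : F) :
    b * sesqOmega σ ε q w v ∈ Λ := by
  have h := Λ.sub_mem (hq.add_swap_mem hQ (b • v) w) (hmin (σ b * q v w))
  rw [hq.smul_left, hq.smul_right, map_mul, hσ] at h
  convert h using 1
  rw [sesqOmega]
  ring

end IsSesq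

theorem stmt4_general {F E : Type*} [Field F] [AddCommGroup E] [Module F E]
    (σ : F →+* F) (hσ : ∀ a : F, σ (σ a) = a)
    (ε : F)
    (Λ : AddSubgroup F)
    (hmin : ∀ a : F, a - ε * σ a ∈ Λ)
    (hproper : Λ ≠ ⊤)
    (q : E → E → F) (hq : IsSesq σ q)
    (hQ : ∀ v : E, q v v ∈ Λ) :
    ∀ v w : E, q v w + ε * σ (q w v) = 0 :=
  fun v w => AddSubgroup.eq_zero_of_forall_mul_mem hproper (hq.mul_sesqOmega_mem hσ hmin hQ w v)

/-- Suppose `Λ ≠ F` is a proper additive subgroup. If `q` is a sesquilinear form on `E` with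
`q(v,v) ∈ Λ` for all `v`, then `ω_q(v,w) = 0` for all `v,w`. -/
theorem stmt4 {F E : Type*} [Field F] [AddCommGroup E] [Module F E]
    (σ : F →+* F) (hσ : ∀ a : F, σ (σ a) = a)
    (ε : F) (hε : ε * σ ε = 1)
    (Λ : AddSubgroup F)
    (hmin : ∀ a : F, a - ε * σ a ∈ Λ)
    (hmax : ∀ a ∈ Λ, a + ε * σ a = 0)
    (hproper : Λ ≠ ⊤)
    (q : E → E → F) (hq : IsSesq σ q)
    (hQ : ∀ v : E, q v v ∈ Λ) :
    ∀ v w : E, q v w + ε * σ (q w v) = 0 :=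
  stmt4_general σ hσ ε Λ hmin hproper q hq hQ
end

section
/- Suppose it is not the case that both σ = id and F has characteristic 2. Then for every sesquilinear form ω on E satisfying ω(v,w) = ε·σ(ω(w,v)) for all v,w ∈ E, there exists a sesquilinear form q on E with ω_q = ω; that is, the map q ↦ ω_q is surjective onto the ε-Hermitian forms. -/
theorem IsSesq.const_mul {F E : Type*} [Field F] [AddCommGroup E] [Module F E]
    {σ : F →+* F} {q : E → E → F} (hq : IsSesq σ q) (c : F) :
    IsSesq σ (fun v w => c * q v w) := by
  obtain ⟨hadd_left, hadd_right, hsmul⟩ := hq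
  refine ⟨fun v v' w => ?_, fun v w w' => ?_, fun a b v w => ?_⟩
  · simp only [hadd_left, mul_add]
  · simp only [hadd_right, mul_add]
  · simp only [hsmul]; ring

theorem RingHom.exists_add_apply_eq_one_of_ne_id {F : Type*} [Field F] {σ : F →+* F}
    (hσ : Function.Involutive σ) (hid : σ ≠ RingHom.id F) : ∃ c : F, c + σ c = 1 := by
  obtain ⟨a, ha⟩ : ∃ a : F, σ a ≠ a := by
    by_contra! hfix
    exact hid (RingHom.ext hfix)
  have hne : a - σ a ≠ 0 := sub_ne_zero.mpr ha.symm
  have hne' : σ a - a ≠ 0 := sub_ne_zero.mpr ha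
  refine ⟨a / (a - σ a), ?_⟩
  rw [map_div₀, map_sub, hσ a]
  field_simp
  ring

theorem RingHom.exists_add_apply_eq_one {F : Type*} [Field F] {σ : F →+* F}
    (hσ : Function.Involutive σ) (hexc : ¬ (σ = RingHom.id F ∧ ringChar F = 2)) :
    ∃ c : F, c + σ c = 1 := by
  by_cases hid : σ = RingHom.id F
  · have htwo : (2 : F) ≠ 0 := Ring.two_ne_zero fun h => hexc ⟨hid, h⟩
    exact ⟨2⁻¹, by rw [hid, RingHom.id_apply, ← two_mul, mul_inv_cancel₀ htwo]⟩
  · exact exists_add_apply_eq_one_of_ne_id hσ hid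

theorem stmt5_general {F E : Type*} [Field F] [AddCommGroup E] [Module F E]
    (σ : F →+* F) (hσ : ∀ a : F, σ (σ a) = a)
    (ε : F)
    (hexc : ¬ (σ = RingHom.id F ∧ ringChar F = 2))
    (ω : E → E → F) (hωs : IsSesq σ ω)
    (hherm : ∀ v w : E, ω v w = ε * σ (ω w v)) :
    ∃ q : E → E → F, IsSesq σ q ∧ ∀ v w : E, q v w + ε * σ (q w v) = ω v w := by
  obtain ⟨c, hc⟩ := RingHom.exists_add_apply_eq_one hσ hexc
  refine ⟨fun v w => c * ω v w, hωs.const_mul c, fun v w => ?_⟩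
  calc c * ω v w + ε * σ (c * ω w v) = (c + σ c) * ω v w := by rw [map_mul, hherm v w]; ring
    _ = ω v w := by rw [hc, one_mul]

/-- Suppose it is not the case that both `σ = id` and `char F = 2`. Then every `ε`-Hermitian
sesquilinear form `ω` on `E` (i.e. `ω(v,w) = ε·σ(ω(w,v))`) equals `ω_q` for some sesquilinear
form `q` on `E`: the map `q ↦ ω_q` is surjective onto `ε`-Hermitian forms. -/
theorem stmt5 {F E : Type*} [Field F] [AddCommGroup E] [Module F E]
    (σ : F →+* F) (hσ : ∀ a : F, σ (σ a) = a)
    (ε : F) (hε : ε * σ ε = 1)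
    (hexc : ¬ (σ = RingHom.id F ∧ ringChar F = 2))
    (ω : E → E → F) (hωs : IsSesq σ ω)
    (hherm : ∀ v w : E, ω v w = ε * σ (ω w v)) :
    ∃ q : E → E → F, IsSesq σ q ∧ ∀ v w : E, q v w + ε * σ (q w v) = ω v w :=
  stmt5_general σ hσ ε hexc ω hωs hherm
end

section
/- Let F be any field and E an F-vector space. For every quadratic form Q : E → F (i.e. Q(a·v) = a²·Q(v) for all a ∈ F, v ∈ E, and B_Q(v,w) = Q(v+w) − Q(v) − Q(w) is bilinear), there exists a bilinear form q on E with q(v,v) = Q(v) for all v ∈ E, and moreover q(v,w) + q(w,v) = B_Q(v,w) for all v,w ∈ E. -/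
section

variable {F E : Type*} [Field F] [AddCommGroup E] [Module F E]

theorem LinearMap.isSesq_id (b : LinearMap.BilinMap F E F) :
    IsSesq (RingHom.id F) (fun v w => b v w) :=
  ⟨fun v v' w => by simp only [map_add, LinearMap.add_apply],
    fun v w w' => map_add (b v) w w',
    fun a c v w => by simp only [map_smul, LinearMap.smul_apply, smul_eq_mul, RingHom.id_apply]; ring⟩

def QuadraticMap.ofIsSesqPolar (Q : E → F) (hQsmul : ∀ (a : F) (v : E), Q (a • v) = a ^ 2 * Q v)
    (hQbil : IsSesq (RingHom.id F) (QuadraticMap.polar Q)) : QuadraticForm F E :=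
  QuadraticMap.ofPolar Q (fun a v => by rw [hQsmul, pow_two, smul_eq_mul]) hQbil.1
    (fun a v w => by simpa using hQbil.2.2 a 1 v w)

end

/-- For every quadratic form `Q : E → F` (i.e. `Q(a•v) = a²·Q(v)` and
`B_Q(v,w) = Q(v+w) − Q(v) − Q(w)` is bilinear), there exists a bilinear form `q` on `E`
with `q(v,v) = Q(v)` for all `v`, and `q(v,w) + q(w,v) = B_Q(v,w)` for all `v,w`. -/
theorem stmt7 {F E : Type*} [Field F] [AddCommGroup E] [Module F E]
    (Q : E → F)
    (hQsmul : ∀ (a : F) (v : E), Q (a • v) = a ^ 2 * Q v)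
    (hQbil : IsSesq (RingHom.id F) (fun v w => Q (v + w) - Q v - Q w)) :
    ∃ q : E → E → F, IsSesq (RingHom.id F) q ∧ (∀ v : E, q v v = Q v) ∧
      ∀ v w : E, q v w + q w v = Q (v + w) - Q v - Q w := by
  obtain ⟨b, hb⟩ :=
    LinearMap.BilinMap.toQuadraticMap_surjective (QuadraticMap.ofIsSesqPolar Q hQsmul hQbil)
  have hdiag : ∀ v, b v v = Q v := fun v => DFunLike.congr_fun hb v
  refine ⟨fun v w => b v w, b.isSesq_id, hdiag, fun v w => ?_⟩
  rw [← LinearMap.BilinMap.polar_toQuadraticMap, hb]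
  rfl
end

section
/- Suppose σ ≠ id. Then there exists a nonzero a ∈ F with ε = a⁻¹·σ(a); and for any such a, a sesquilinear form f on E lies in X(E,σ,ε,Λ) if and only if the sesquilinear form a·f lies in X(E,σ,1,a·Λ), where a·Λ = {a·λ : λ ∈ Λ}. Hence multiplication by a induces an isomorphism Sesq_σ(E)/X(E,σ,ε,Λ) ≅ Sesq_σ(E)/X(E,σ,1,a·Λ). -/
/-- Membership in `X(E,σ,ε,Λ)`: `f(v,v) ∈ Λ` and `f(w,v) = −ε·σ(f(v,w))` for all `v,w`. -/
def InX {F E : Type*} [Field F] [AddCommGroup E] [Module F E]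
    (σ : F →+* F) (ε : F) (Λ : Set F) (f : E → E → F) : Prop :=
  (∀ v : E, f v v ∈ Λ) ∧ ∀ v w : E, f w v = -(ε * σ (f v w))

/-! Hilbert 90 for the involution `σ`: the elements `c + σ (ε * c)` satisfy `a * ε = σ a`, and
they cannot all vanish unless `σ = id`. Multiplying by such an `a ≠ 0` then turns
`ε`-hermitian forms into hermitian ones, since `σ (a * x) = a * (ε * σ x)`. -/

section

variable {F : Type*} [Field F]

theorem exists_ne_zero_mul_eq_map_of_mul_map_eq_one (σ : F →+* F)
    (hσ : Function.Involutive σ) (hσne : σ ≠ RingHom.id F) {ε : F} (hε : ε * σ ε = 1) :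
    ∃ a : F, a ≠ 0 ∧ a * ε = σ a := by
  have hfixed : ∀ c : F, (c + σ (ε * c)) * ε = σ (c + σ (ε * c)) := by
    intro c
    rw [map_add, hσ, map_mul]
    linear_combination σ c * hε
  obtain ⟨c, hc⟩ : ∃ c : F, c + σ (ε * c) ≠ 0 := by
    by_contra! h
    have hε_neg_one : ε = -1 := by
      have h1 := h 1
      rw [mul_one] at h1
      rw [← hσ ε, eq_neg_of_add_eq_zero_right h1, map_neg, map_one]
    apply hσne
    ext x
    have hx := h x
    rw [hε_neg_one, neg_one_mul, map_neg] at hx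
    linear_combination -hx
  exact ⟨_, hc, hfixed c⟩

theorem inX_iff_inX_mul {E : Type*} [AddCommGroup E] [Module F E] (σ : F →+* F)
    {ε a : F} (ha : a ≠ 0) (haε : a * ε = σ a) (Λ : Set F) (f : E → E → F) :
    InX σ ε Λ f ↔ InX σ 1 ((fun x => a * x) '' Λ) (fun v w => a * f v w) := by
  have hsymm : ∀ x y : F, a * y = -(1 * σ (a * x)) ↔ y = -(ε * σ x) := by
    intro x y
    rw [map_mul, ← haε, show -(1 * (a * ε * σ x)) = a * -(ε * σ x) by ring, mul_right_inj' ha]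
  simp only [InX, (mul_right_injective₀ ha).mem_set_image, hsymm]

end

theorem stmt8_general {F E : Type*} [Field F] [AddCommGroup E] [Module F E]
    (σ : F →+* F) (hσ : ∀ a : F, σ (σ a) = a)
    (hσne : σ ≠ RingHom.id F)
    (ε : F) (hε : ε * σ ε = 1)
    (Λ : AddSubgroup F) :
    (∃ a : F, a ≠ 0 ∧ ε = a⁻¹ * σ a) ∧
    ∀ a : F, a ≠ 0 → ε = a⁻¹ * σ a →
      ∀ f : E → E → F, IsSesq σ f →
        (InX σ ε (Λ : Set F) f ↔
          InX σ 1 ((fun x => a * x) '' (Λ : Set F)) (fun v w => a * f v w)) := by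
  refine ⟨?_, fun a ha hεa f _ => ?_⟩
  · obtain ⟨a, ha, haε⟩ := exists_ne_zero_mul_eq_map_of_mul_map_eq_one σ hσ hσne hε
    exact ⟨a, ha, (eq_inv_mul_iff_mul_eq₀ ha).2 haε⟩
  · exact inX_iff_inX_mul σ ha ((eq_inv_mul_iff_mul_eq₀ ha).1 hεa) _ f

/-- If `σ ≠ id`, there is a nonzero `a ∈ F` with `ε = a⁻¹·σ(a)`; and for any such `a`,
a sesquilinear form `f` lies in `X(E,σ,ε,Λ)` iff `a·f` lies in `X(E,σ,1,a·Λ)`. Hence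
multiplication by `a` induces an isomorphism `Sesq/X(E,σ,ε,Λ) ≅ Sesq/X(E,σ,1,aΛ)`. -/
theorem stmt8 {F E : Type*} [Field F] [AddCommGroup E] [Module F E]
    (σ : F →+* F) (hσ : ∀ a : F, σ (σ a) = a)
    (hσne : σ ≠ RingHom.id F)
    (ε : F) (hε : ε * σ ε = 1)
    (Λ : AddSubgroup F)
    (hmin : ∀ a : F, a - ε * σ a ∈ Λ)
    (hmax : ∀ a ∈ Λ, a + ε * σ a = 0) :
    (∃ a : F, a ≠ 0 ∧ ε = a⁻¹ * σ a) ∧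
    ∀ a : F, a ≠ 0 → ε = a⁻¹ * σ a →
      ∀ f : E → E → F, IsSesq σ f →
        (InX σ ε (Λ : Set F) f ↔
          InX σ 1 ((fun x => a * x) '' (Λ : Set F)) (fun v w => a * f v w)) :=
  stmt8_general σ hσ hσne ε hε Λ
end

section
/- Let (E,q) be a formed space and let U, W be isotropic subspaces of E with dim U = dim W and dim(U ∩ R(E)) = dim(W ∩ R(E)). Then there exists a bijective isometry g : E → E with g(U) = W; that is, the group of bijective isometries of (E,q) acts transitively on isotropic subspaces with given dimension and given dimension of intersection with the radical. -/
/-- `ω_q(v,w) = q(v,w) + ε·σ(q(w,v))`. -/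
def omegaF {F E : Type*} [Field F] [AddCommGroup E] [Module F E]
    (σ : F →+* F) (ε : F) (q : E → E → F) (v w : E) : F :=
  q v w + ε * σ (q w v)

/-- The radical `R(E) = {v ∈ K(E) : q(v,v) ∈ Λ}` of a formed space (as a set). -/
def radSet {F E : Type*} [Field F] [AddCommGroup E] [Module F E]
    (σ : F →+* F) (ε : F) (q : E → E → F) (Λ : Set F) : Set E :=
  {v : E | (∀ w : E, omegaF σ ε q w v = 0) ∧ q v v ∈ Λ}

/-- A subspace `U` is isotropic if `ω_q` vanishes on `U` and `q(u,u) ∈ Λ` for `u ∈ U`. -/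
def IsIsotropic {F E : Type*} [Field F] [AddCommGroup E] [Module F E]
    (σ : F →+* F) (ε : F) (q : E → E → F) (Λ : Set F) (U : Submodule F E) : Prop :=
  (∀ u ∈ U, ∀ u' ∈ U, omegaF σ ε q u u' = 0) ∧ ∀ u ∈ U, q u u ∈ Λ

open Module Submodule

theorem Submodule.exists_linearEquiv_of_isCompl {R M : Type*} [Ring R] [AddCommGroup M]
    [Module R M] {p p' r r' : Submodule R M} (hp : IsCompl p p') (hr : IsCompl r r')
    (e₁ : p ≃ₗ[R] r) (e₂ : p' ≃ₗ[R] r') :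
    ∃ e : M ≃ₗ[R] M, (∀ x : p, e x = e₁ x) ∧ ∀ x : p', e x = e₂ x :=
  ⟨(prodEquivOfIsCompl p p' hp).symm.trans ((e₁.prodCongr e₂).trans (prodEquivOfIsCompl r r' hr)),
    fun x => by simp, fun x => by simp⟩

theorem Submodule.exists_linearEquiv_map_eq {K M : Type*} [DivisionRing K] [AddCommGroup M]
    [Module K M] [FiniteDimensional K M] {A B : Submodule K M}
    (h : finrank K A = finrank K B) : ∃ e : M ≃ₗ[K] M, A.map (e : M →ₗ[K] M) = B := by
  obtain ⟨A', hA'⟩ := A.exists_isCompl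
  obtain ⟨B', hB'⟩ := B.exists_isCompl
  have h' : finrank K A' = finrank K B' := by
    have := finrank_add_eq_of_isCompl hA'
    have := finrank_add_eq_of_isCompl hB'
    omega
  obtain ⟨e, he, -⟩ := exists_linearEquiv_of_isCompl hA' hB'
    (LinearEquiv.ofFinrankEq _ _ h) (LinearEquiv.ofFinrankEq _ _ h')
  refine ⟨e, eq_of_le_of_finrank_eq ?_ ((LinearEquiv.finrank_map_eq e A).trans h)⟩
  rintro _ ⟨a, ha, rfl⟩
  simp [he ⟨a, ha⟩]

/-- A formed space whose form parameter `Λ` is moreover stable under `t ↦ a σ(a) t`; the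
theorem reduces to this case via `normCore` below. -/
structure FormedSpace (F E : Type*) [Field F] [AddCommGroup E] [Module F E] where
  σ : F →+* F
  σ_σ : ∀ a, σ (σ a) = a
  ε : F
  ε_mul_σ_ε : ε * σ ε = 1
  Λ : AddSubgroup F
  sub_mem_Λ : ∀ a, a - ε * σ a ∈ Λ
  add_eq_zero_of_mem_Λ : ∀ a ∈ Λ, a + ε * σ a = 0
  norm_mul_mem_Λ : ∀ a t, t ∈ Λ → a * σ a * t ∈ Λ
  q : E → E → F
  isSesq : IsSesq σ q

namespace FormedSpace

variable {F E : Type*} [Field F] [AddCommGroup E] [Module F E] (V : FormedSpace F E)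

def om (v w : E) : F := omegaF V.σ V.ε V.q v w

/-- `q(v,v)` modulo `Λ`: the conditions `q(u,u) ∈ Λ` and `q(gv,gv) - q(v,v) ∈ Λ` become
equations. -/
def Q (v : E) : F ⧸ V.Λ := (V.q v v : F ⧸ V.Λ)

theorem ε_ne_zero : V.ε ≠ 0 := left_ne_zero_of_mul_eq_one V.ε_mul_σ_ε

theorem σ_ε : V.σ V.ε = V.ε⁻¹ := (inv_eq_of_mul_eq_one_right V.ε_mul_σ_ε).symm

theorem q_add_left (v v' w : E) : V.q (v + v') w = V.q v w + V.q v' w := V.isSesq.1 v v' w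

theorem q_add_right (v w w' : E) : V.q v (w + w') = V.q v w + V.q v w' := V.isSesq.2.1 v w w'

theorem q_smul_smul (a b : F) (v w : E) : V.q (a • v) (b • w) = V.σ a * V.q v w * b :=
  V.isSesq.2.2 a b v w

theorem q_smul_left (a : F) (v w : E) : V.q (a • v) w = V.σ a * V.q v w := by
  simpa using V.q_smul_smul a 1 v w

theorem q_smul_right (b : F) (v w : E) : V.q v (b • w) = V.q v w * b := by
  simpa using V.q_smul_smul 1 b v w

theorem om_add_left (v v' w : E) : V.om (v + v') w = V.om v w + V.om v' w := by
  simp only [om, omegaF, q_add_left, q_add_right, map_add]; ring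

theorem om_add_right (v w w' : E) : V.om v (w + w') = V.om v w + V.om v w' := by
  simp only [om, omegaF, q_add_left, q_add_right, map_add]; ring

theorem om_smul_left (a : F) (v w : E) : V.om (a • v) w = V.σ a * V.om v w := by
  simp only [om, omegaF, q_smul_left, q_smul_right, map_mul]; ring

theorem om_smul_right (a : F) (v w : E) : V.om v (a • w) = a * V.om v w := by
  simp only [om, omegaF, q_smul_left, q_smul_right, map_mul, V.σ_σ]; ring

theorem om_neg_right (v w : E) : V.om v (-w) = -V.om v w := by
  simpa using V.om_smul_right (-1) v w

theorem om_sub_right (v w w' : E) : V.om v (w - w') = V.om v w - V.om v w' := by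
  rw [sub_eq_add_neg, om_add_right, om_neg_right, sub_eq_add_neg]

theorem om_zero_right (v : E) : V.om v 0 = 0 := by
  simpa using V.om_smul_right 0 v 0

theorem om_comm (v w : E) : V.om w v = V.ε * V.σ (V.om v w) := by
  simp only [om, omegaF, map_add, map_mul, V.σ_σ]
  linear_combination (-V.q w v) * V.ε_mul_σ_ε

theorem om_eq_zero_comm {v w : E} : V.om v w = 0 ↔ V.om w v = 0 := by
  rw [V.om_comm v w, mul_eq_zero, map_eq_zero, or_iff_right V.ε_ne_zero]

theorem Q_eq_zero_iff {v : E} : V.Q v = 0 ↔ V.q v v ∈ V.Λ := QuotientAddGroup.eq_zero_iff _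

theorem Q_eq_Q_iff {v w : E} : V.Q v = V.Q w ↔ V.q v v - V.q w w ∈ V.Λ :=
  QuotientAddGroup.eq_iff_sub_mem

theorem om_self_of_Q_eq_zero {v : E} (hv : V.Q v = 0) : V.om v v = 0 :=
  V.add_eq_zero_of_mem_Λ _ (V.Q_eq_zero_iff.mp hv)

theorem Q_add (v w : E) : V.Q (v + w) = V.Q v + V.Q w + V.om w v := by
  have h : V.q (v + w) (v + w) - (V.q v v + V.q w w + V.om w v)
      = V.q v w - V.ε * V.σ (V.q v w) := by
    simp only [q_add_left, q_add_right, om, omegaF]; ring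
  simp only [Q, ← QuotientAddGroup.mk_add]
  exact QuotientAddGroup.eq_iff_sub_mem.mpr (h ▸ V.sub_mem_Λ _)

theorem Q_add_of_om_eq_zero {v w : E} (h : V.om w v = 0) : V.Q (v + w) = V.Q v + V.Q w := by
  rw [Q_add, h, QuotientAddGroup.mk_zero, add_zero]

theorem Q_smul_eq_zero (a : F) {v : E} (hv : V.Q v = 0) : V.Q (a • v) = 0 := by
  rw [Q_eq_zero_iff, q_smul_smul, mul_comm _ a, ← mul_assoc]
  exact V.norm_mul_mem_Λ a _ (V.Q_eq_zero_iff.mp hv)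

theorem mk_sub_ε_mul_σ (a : F) : ((a - V.ε * V.σ a : F) : F ⧸ V.Λ) = 0 :=
  (QuotientAddGroup.eq_zero_iff _).mpr (V.sub_mem_Λ a)

structure IsIsometry (g : E → E) : Prop where
  om_apply_apply : ∀ v w, V.om (g v) (g w) = V.om v w
  Q_apply : ∀ v, V.Q (g v) = V.Q v

def ker : Submodule F E where
  carrier := {v | ∀ w, V.om w v = 0}
  add_mem' hv hw u := by rw [om_add_right, hv u, hw u, add_zero]
  zero_mem' u := V.om_zero_right u
  smul_mem' a v hv u := by rw [om_smul_right, hv u, mul_zero]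

theorem mem_ker' {v : E} : v ∈ V.ker ↔ ∀ w, V.om v w = 0 :=
  forall_congr' fun _ => V.om_eq_zero_comm.symm

theorem exists_om_ne_zero {v : E} (hv : v ∉ V.ker) : ∃ w, V.om v w ≠ 0 :=
  not_forall.mp (mt V.mem_ker'.mpr hv)

def Isotropic (U : Submodule F E) : Prop := IsIsotropic V.σ V.ε V.q V.Λ U

def restrict (P : Submodule F E) : FormedSpace F P :=
  { V with
    q := fun a b => V.q a b
    isSesq := ⟨fun _ _ _ => V.q_add_left _ _ _, fun _ _ _ => V.q_add_right _ _ _,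
      fun _ _ _ _ => V.q_smul_smul _ _ _ _⟩ }

theorem restrict_om {P : Submodule F E} (a b : P) : (V.restrict P).om a b = V.om a b := rfl

theorem restrict_Q {P : Submodule F E} (a : P) : (V.restrict P).Q a = V.Q a := rfl

section Isometry

variable {V}

theorem IsIsometry.comp {g h : E → E} (hg : V.IsIsometry g) (hh : V.IsIsometry h) :
    V.IsIsometry (g ∘ h) :=
  ⟨fun v w => (hg.om_apply_apply _ _).trans (hh.om_apply_apply v w),
    fun v => (hg.Q_apply _).trans (hh.Q_apply v)⟩

theorem IsIsometry.trans {g h : E ≃ₗ[F] E} (hg : V.IsIsometry g) (hh : V.IsIsometry h) :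
    V.IsIsometry (g.trans h) :=
  hh.comp hg

theorem IsIsometry.apply_mem_ker_iff {g : E ≃ₗ[F] E} (hg : V.IsIsometry g) {v : E} :
    g v ∈ V.ker ↔ v ∈ V.ker :=
  ⟨fun h w => hg.om_apply_apply w v ▸ h (g w),
    fun h w => by rw [← g.apply_symm_apply w, hg.om_apply_apply]; exact h _⟩

theorem IsIsometry.mem_ker_of_apply_eq_zero {g : E → E} (hg : V.IsIsometry g) {z : E}
    (hz : g z = 0) : z ∈ V.ker := fun w => by
  rw [← hg.om_apply_apply, hz, om_zero_right]

theorem Isotropic.om_eq_zero {U : Submodule F E} (hU : V.Isotropic U) {u u' : E} (hu : u ∈ U)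
    (hu' : u' ∈ U) : V.om u u' = 0 :=
  hU.1 u hu u' hu'

theorem Isotropic.Q_eq_zero {U : Submodule F E} (hU : V.Isotropic U) {u : E} (hu : u ∈ U) :
    V.Q u = 0 :=
  V.Q_eq_zero_iff.mpr (hU.2 u hu)

theorem Isotropic.mono {U U' : Submodule F E} (hU : V.Isotropic U) (h : U' ≤ U) :
    V.Isotropic U' :=
  ⟨fun _ hu _ hu' => hU.1 _ (h hu) _ (h hu'), fun _ hu => hU.2 _ (h hu)⟩

theorem Isotropic.map {U : Submodule F E} (hU : V.Isotropic U) {g : E ≃ₗ[F] E}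
    (hg : V.IsIsometry g) : V.Isotropic (U.map (g : E →ₗ[F] E)) := by
  refine ⟨?_, ?_⟩
  · rintro _ ⟨u, hu, rfl⟩ _ ⟨u', hu', rfl⟩
    exact (hg.om_apply_apply u u').trans (hU.om_eq_zero hu hu')
  · rintro _ ⟨u, hu, rfl⟩
    exact V.Q_eq_zero_iff.mp ((hg.Q_apply u).trans (hU.Q_eq_zero hu))

theorem Isotropic.comap_subtype {U : Submodule F E} (hU : V.Isotropic U) (P : Submodule F E) :
    (V.restrict P).Isotropic (U.comap P.subtype) :=
  ⟨fun a ha b hb => hU.1 a ha b hb, fun a ha => hU.2 a ha⟩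

theorem disjoint_ker_map {U : Submodule F E} (hU : Disjoint U V.ker) {g : E ≃ₗ[F] E}
    (hg : V.IsIsometry g) : Disjoint (U.map (g : E →ₗ[F] E)) V.ker := by
  rw [disjoint_def] at hU ⊢
  rintro _ ⟨u, hu, rfl⟩ hker
  rw [LinearEquiv.coe_coe, hU u hu (hg.apply_mem_ker_iff.mp hker), map_zero]

end Isometry

def omRight (v : E) : E →ₗ[F] F where
  toFun := V.om v
  map_add' := V.om_add_right v
  map_smul' a w := V.om_smul_right a v w

@[simp] theorem omRight_apply (v w : E) : V.omRight v w = V.om v w := rfl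

/-- For isotropic `x, y` with `ω(x,y) ≠ 0`: sends `x ↦ y`, `y ↦ (ω(x,y)/ω(y,x)) x` and fixes
`{x,y}^⊥` pointwise. -/
def swapMap (x y : E) : E →ₗ[F] E :=
  LinearMap.id + ((V.om y x)⁻¹ • (V.omRight x - V.omRight y)).smulRight x
    + ((V.om y x)⁻¹ • V.omRight y - (V.om x y)⁻¹ • V.omRight x).smulRight y

theorem swapMap_apply (x y z : E) :
    V.swapMap x y z = z + ((V.om y x)⁻¹ * (V.om x z - V.om y z)) • x
      + ((V.om y x)⁻¹ * V.om y z - (V.om x y)⁻¹ * V.om x z) • y := by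
  simp [swapMap, smul_eq_mul, mul_sub]

section swap

variable {V} {x y : E} (hx : V.Q x = 0) (hy : V.Q y = 0) (hxy : V.om x y ≠ 0)
include hx hy hxy

omit hy in
theorem swapMap_apply_left : V.swapMap x y x = y := by
  have hyx : V.om y x ≠ 0 := fun h => hxy (V.om_eq_zero_comm.mpr h)
  rw [swapMap_apply, V.om_self_of_Q_eq_zero hx, zero_sub, mul_neg, inv_mul_cancel₀ hyx,
    mul_zero, sub_zero, neg_one_smul, one_smul, add_neg_cancel, zero_add]

theorem om_swapMap_swapMap (z w : E) :
    V.om (V.swapMap x y z) (V.swapMap x y w) = V.om z w := by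
  have hσ : V.σ (V.om x y) ≠ 0 := (map_ne_zero _).mpr hxy
  have hε := V.ε_ne_zero
  simp only [swapMap_apply, om_add_left, om_add_right, om_smul_left, om_smul_right,
    V.om_self_of_Q_eq_zero hx, V.om_self_of_Q_eq_zero hy, V.om_comm x y, V.om_comm x z,
    V.om_comm y z, map_mul, map_sub, map_inv₀, V.σ_σ, V.σ_ε]
  field_simp
  ring

theorem Q_swapMap (z : E) : V.Q (V.swapMap x y z) = V.Q z := by
  set α := (V.om y x)⁻¹ * (V.om x z - V.om y z)
  set β := (V.om y x)⁻¹ * V.om y z - (V.om x y)⁻¹ * V.om x z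
  set t := V.ε * V.σ (V.om x z) * V.om x z * (V.om x y)⁻¹
  have hg : V.swapMap x y z = z + (α • x + β • y) := by rw [swapMap_apply]; abel
  have key : V.om (β • y) (α • x) + V.om (α • x + β • y) z = t - V.ε * V.σ t := by
    have hσ : V.σ (V.om x y) ≠ 0 := (map_ne_zero _).mpr hxy
    have hε := V.ε_ne_zero
    simp only [α, β, t, om_add_left, om_smul_left, om_smul_right, V.om_comm x y, map_mul,
      map_sub, map_inv₀, V.σ_σ, V.σ_ε]
    field_simp
    ring
  rw [hg, Q_add, Q_add, Q_smul_eq_zero _ _ hx, Q_smul_eq_zero _ _ hy, zero_add, zero_add,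
    add_assoc, ← QuotientAddGroup.mk_add, key, mk_sub_ε_mul_σ, add_zero]

theorem isIsometry_swapMap : V.IsIsometry (V.swapMap x y) :=
  ⟨om_swapMap_swapMap hx hy hxy, Q_swapMap hx hy hxy⟩

omit hx hy hxy in
theorem swapMap_apply_of_mem_ker {z : E} (hz : z ∈ V.ker) : V.swapMap x y z = z := by
  simp [swapMap_apply, hz x, hz y]

theorem injective_swapMap : Function.Injective (V.swapMap x y) := by
  rw [← LinearMap.ker_eq_bot, LinearMap.ker_eq_bot']
  intro z hz
  rw [← hz,
    swapMap_apply_of_mem_ker ((isIsometry_swapMap hx hy hxy).mem_ker_of_apply_eq_zero hz)]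

end swap

theorem exists_isIsometry_apply_eq_of_om_ne_zero [FiniteDimensional F E] {x y : E}
    (hx : V.Q x = 0) (hy : V.Q y = 0) (hxy : V.om x y ≠ 0) :
    ∃ g : E ≃ₗ[F] E, V.IsIsometry g ∧ g x = y :=
  ⟨LinearEquiv.ofInjectiveEndo _ (injective_swapMap hx hy hxy), isIsometry_swapMap hx hy hxy,
    swapMap_apply_left hx hxy⟩

theorem exists_Q_add_smul_eq_zero {x w : E} (hx : V.Q x = 0) (hxw : V.om x w ≠ 0) :
    ∃ t : F, V.Q (w + t • x) = 0 := by
  refine ⟨-V.σ ((V.om x w)⁻¹ * V.q w w), ?_⟩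
  rw [Q_add, Q_smul_eq_zero _ _ hx, om_smul_left, map_neg, V.σ_σ, neg_mul, mul_assoc,
    mul_comm (V.q w w), ← mul_assoc, inv_mul_cancel₀ hxw, one_mul, Q, add_zero,
    QuotientAddGroup.mk_neg, add_neg_cancel]

theorem exists_om_ne_zero_and_om_ne_zero {x y : E} (hx : x ∉ V.ker) (hy : y ∉ V.ker) :
    ∃ w, V.om x w ≠ 0 ∧ V.om y w ≠ 0 := by
  obtain ⟨w₁, hw₁⟩ := V.exists_om_ne_zero hx
  obtain ⟨w₂, hw₂⟩ := V.exists_om_ne_zero hy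
  by_cases h₁ : V.om y w₁ = 0
  · by_cases h₂ : V.om x w₂ = 0
    · exact ⟨w₁ + w₂, by simpa [om_add_right, h₂] using hw₁,
        by simpa [om_add_right, h₁] using hw₂⟩
    · exact ⟨w₂, h₂, hw₂⟩
  · exact ⟨w₁, hw₁, h₁⟩

/-- If `ω(x,y) = 0`, pass through an isotropic `z` with `ω(x,z) ≠ 0 ≠ ω(z,y)`. -/
theorem exists_isIsometry_apply_eq [FiniteDimensional F E] {x y : E} (hx : V.Q x = 0)
    (hy : V.Q y = 0) (hxK : x ∉ V.ker) (hyK : y ∉ V.ker) :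
    ∃ g : E ≃ₗ[F] E, V.IsIsometry g ∧ g x = y := by
  by_cases hxy : V.om x y = 0
  swap
  · exact V.exists_isIsometry_apply_eq_of_om_ne_zero hx hy hxy
  obtain ⟨w, hxw, hyw⟩ := V.exists_om_ne_zero_and_om_ne_zero hxK hyK
  obtain ⟨t, hz⟩ := V.exists_Q_add_smul_eq_zero hx hxw
  have hxz : V.om x (w + t • x) ≠ 0 := by
    rwa [om_add_right, om_smul_right, V.om_self_of_Q_eq_zero hx, mul_zero, add_zero]
  have hzy : V.om (w + t • x) y ≠ 0 := by
    rwa [Ne, V.om_eq_zero_comm, om_add_right, om_smul_right, V.om_eq_zero_comm.mp hxy, mul_zero,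
      add_zero]
  obtain ⟨g₁, hg₁, hg₁x⟩ := V.exists_isIsometry_apply_eq_of_om_ne_zero hx hz hxz
  obtain ⟨g₂, hg₂, hg₂z⟩ := V.exists_isIsometry_apply_eq_of_om_ne_zero hz hy hzy
  exact ⟨g₁.trans g₂, hg₁.trans hg₂, by rw [LinearEquiv.trans_apply, hg₁x, hg₂z]⟩

section Orthogonal

variable {V} {P H : Submodule F E} (horth : ∀ h ∈ H, ∀ p ∈ P, V.om h p = 0)
include horth

theorem om_add_add_of_orthogonal {p p' h h' : E} (hp : p ∈ P) (hp' : p' ∈ P) (hh : h ∈ H)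
    (hh' : h' ∈ H) : V.om (p + h) (p' + h') = V.om p p' + V.om h h' := by
  rw [om_add_left, om_add_right, om_add_right, horth h hh p' hp',
    V.om_eq_zero_comm.mpr (horth h' hh' p hp)]
  ring

theorem Q_add_of_orthogonal {p h : E} (hp : p ∈ P) (hh : h ∈ H) :
    V.Q (p + h) = V.Q p + V.Q h :=
  V.Q_add_of_om_eq_zero (horth h hh p hp)

theorem mem_ker_of_mem_ker_restrict (hPH : P ⊔ H = ⊤) {p : P} (hp : p ∈ (V.restrict P).ker) :
    (p : E) ∈ V.ker := by
  intro w
  obtain ⟨p', hp', h, hh, rfl⟩ := mem_sup.mp (hPH ▸ mem_top : w ∈ P ⊔ H)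
  rw [om_add_left, horth h hh p p.2, add_zero]
  exact hp ⟨p', hp'⟩

theorem disjoint_ker_restrict_comap (hPH : P ⊔ H = ⊤) {X : Submodule F E}
    (hXK : Disjoint X V.ker) : Disjoint (X.comap P.subtype) (V.restrict P).ker :=
  disjoint_def.mpr fun a ha haK =>
    Subtype.ext (disjoint_def.mp hXK a ha (mem_ker_of_mem_ker_restrict horth hPH haK))

theorem exists_isIsometry_extend (hPH : IsCompl P H) (g : P ≃ₗ[F] P)
    (hg : (V.restrict P).IsIsometry g) :
    ∃ G : E ≃ₗ[F] E, V.IsIsometry G ∧ (∀ p : P, G p = g p) ∧ ∀ h ∈ H, G h = h := by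
  obtain ⟨G, hGP, hGH⟩ := exists_linearEquiv_of_isCompl hPH hPH g (LinearEquiv.refl F H)
  have hdecomp : ∀ v, ∃ p : P, ∃ h ∈ H, v = p + h ∧ G v = g p + h := fun v => by
    obtain ⟨p, hp, h, hh, rfl⟩ := mem_sup.mp (hPH.sup_eq_top ▸ mem_top : v ∈ P ⊔ H)
    exact ⟨⟨p, hp⟩, h, hh, rfl, by rw [map_add, hGP ⟨p, hp⟩, hGH ⟨h, hh⟩]; rfl⟩
  refine ⟨G, ⟨fun v w => ?_, fun v => ?_⟩, hGP, fun h hh => hGH ⟨h, hh⟩⟩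
  · obtain ⟨p, h, hh, rfl, hv⟩ := hdecomp v
    obtain ⟨p', h', hh', rfl, hw⟩ := hdecomp w
    rw [hv, hw, om_add_add_of_orthogonal horth (g p).2 (g p').2 hh hh',
      om_add_add_of_orthogonal horth p.2 p'.2 hh hh', ← restrict_om, ← restrict_om,
      hg.om_apply_apply]
  · obtain ⟨p, h, hh, rfl, hv⟩ := hdecomp v
    rw [hv, Q_add_of_orthogonal horth (g p).2 hh, Q_add_of_orthogonal horth p.2 hh,
      ← restrict_Q, ← restrict_Q, hg.Q_apply]

end Orthogonal

def orthogonal (s : Set E) : Submodule F E where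
  carrier := {z | ∀ x ∈ s, V.om x z = 0}
  add_mem' hv hw x hx := by rw [om_add_right, hv x hx, hw x hx, add_zero]
  zero_mem' x _ := V.om_zero_right x
  smul_mem' a v hv x hx := by rw [om_smul_right, hv x hx, mul_zero]

theorem mem_orthogonal_pair {e f z : E} :
    z ∈ V.orthogonal {e, f} ↔ V.om e z = 0 ∧ V.om f z = 0 := by
  simp [orthogonal]

theorem om_eq_zero_of_mem_span {s : Set E} {z h : E} (hz : z ∈ V.orthogonal s)
    (hh : h ∈ span F s) : V.om h z = 0 := by
  induction hh using span_induction with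
  | mem x hx => exact hz x hx
  | zero => rw [V.om_eq_zero_comm, om_zero_right]
  | add x y _ _ hx hy => rw [om_add_left, hx, hy, add_zero]
  | smul a x _ hx => rw [om_smul_left, hx, mul_zero]

theorem exists_om_eq_one {e : E} (he : V.Q e = 0) (heK : e ∉ V.ker) :
    ∃ f, V.Q f = 0 ∧ V.om e f = 1 := by
  obtain ⟨w, hw⟩ := V.exists_om_ne_zero heK
  obtain ⟨t, hz⟩ := V.exists_Q_add_smul_eq_zero he hw
  refine ⟨(V.om e w)⁻¹ • (w + t • e), V.Q_smul_eq_zero _ hz, ?_⟩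
  rw [om_smul_right, om_add_right, om_smul_right, V.om_self_of_Q_eq_zero he, mul_zero, add_zero,
    inv_mul_cancel₀ hw]

theorem om_eq_ε_of_om_eq_one {e f : E} (hef : V.om e f = 1) : V.om f e = V.ε := by
  rw [V.om_comm, hef, map_one, mul_one]

section HyperbolicPair

variable {V} {e f : E} (he : V.Q e = 0) (hf : V.Q f = 0) (hef : V.om e f = 1)
include he hf hef

theorem sub_sub_mem_orthogonal_pair (z : E) :
    z - (V.σ V.ε * V.om f z) • e - V.om e z • f ∈ V.orthogonal {e, f} := by
  rw [mem_orthogonal_pair]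
  simp only [om_sub_right, om_smul_right, V.om_self_of_Q_eq_zero he, V.om_self_of_Q_eq_zero hf,
    hef, V.om_eq_ε_of_om_eq_one hef, V.σ_ε]
  constructor
  · ring
  · field_simp [V.ε_ne_zero]
    ring

theorem isCompl_orthogonal_pair : IsCompl (V.orthogonal {e, f}) (span F {e, f}) := by
  refine ⟨disjoint_def.mpr fun z hz hz' => ?_, codisjoint_iff.mpr (eq_top_iff.mpr fun z _ => ?_)⟩
  · obtain ⟨a, b, rfl⟩ := mem_span_pair.mp hz'
    obtain ⟨h₁, h₂⟩ := V.mem_orthogonal_pair.mp hz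
    simp only [om_add_right, om_smul_right, V.om_self_of_Q_eq_zero he, V.om_self_of_Q_eq_zero hf,
      hef, V.om_eq_ε_of_om_eq_one hef] at h₁ h₂
    simp_all [V.ε_ne_zero]
  · refine mem_sup.mpr ⟨_, sub_sub_mem_orthogonal_pair he hf hef z, _,
      mem_span_pair.mpr ⟨V.σ V.ε * V.om f z, V.om e z, rfl⟩, ?_⟩
    abel

theorem sub_smul_mem_orthogonal_pair {X : Submodule F E} (hX : V.Isotropic X) (heX : e ∈ X)
    {x : E} (hx : x ∈ X) : x - (V.σ V.ε * V.om f x) • e ∈ X ⊓ V.orthogonal {e, f} := by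
  refine ⟨X.sub_mem hx (X.smul_mem _ heX), ?_⟩
  simpa [hX.om_eq_zero heX hx] using sub_sub_mem_orthogonal_pair he hf hef x

theorem finrank_comap_orthogonal_pair_add_one [FiniteDimensional F E] {X : Submodule F E}
    (hX : V.Isotropic X) (heX : e ∈ X) :
    finrank F (X.comap (V.orthogonal {e, f}).subtype) + 1 = finrank F X := by
  have he0 : e ≠ 0 := by rintro rfl; simp [V.om_eq_zero_comm.mp (V.om_zero_right f)] at hef
  have hsup : X ⊓ V.orthogonal {e, f} ⊔ span F {e} = X := by
    refine le_antisymm (sup_le inf_le_left ((span_singleton_le_iff_mem _ _).mpr heX))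
      fun x hx => mem_sup.mpr ⟨_, sub_smul_mem_orthogonal_pair he hf hef hX heX hx, _,
        smul_mem _ _ (mem_span_singleton_self e), sub_add_cancel _ _⟩
  have hinf : X ⊓ V.orthogonal {e, f} ⊓ span F {e} = ⊥ :=
    ((isCompl_orthogonal_pair he hf hef).disjoint.mono inf_le_right
      (span_mono (by simp))).eq_bot
  have := finrank_sup_add_finrank_inf_eq (X ⊓ V.orthogonal {e, f}) (span F {e})
  rw [hsup, hinf, finrank_bot, finrank_span_singleton he0] at this
  rw [← (comapSubtypeEquivOfLe (inf_le_right : X ⊓ V.orthogonal {e, f} ≤ _)).finrank_eq,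
    comap_inf, comap_subtype_self, inf_top_eq] at this
  omega

end HyperbolicPair

def TransitiveOnIsotropic (d : ℕ) : Prop :=
  ∀ U W : Submodule F E, V.Isotropic U → V.Isotropic W → Disjoint U V.ker → Disjoint W V.ker →
    finrank F U = d → finrank F W = d →
    ∃ g : E ≃ₗ[F] E, V.IsIsometry g ∧ U.map (g : E →ₗ[F] E) = W

theorem transitiveOnIsotropic_zero [FiniteDimensional F E] : V.TransitiveOnIsotropic 0 :=
  fun U W _ _ _ _ hU hW => by
    rw [finrank_eq_zero.mp hU, finrank_eq_zero.mp hW]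
    exact ⟨LinearEquiv.refl F E, ⟨fun _ _ => rfl, fun _ => rfl⟩, map_bot _⟩

/-- Split off a hyperbolic plane `⟨e, f⟩` and apply `ih` to its orthogonal complement. -/
theorem exists_isIsometry_map_eq_of_mem [FiniteDimensional F E] {d : ℕ}
    (ih : ∀ P : Submodule F E, (V.restrict P).TransitiveOnIsotropic d) {U W : Submodule F E}
    (hU : V.Isotropic U) (hW : V.Isotropic W) (hUK : Disjoint U V.ker) (hWK : Disjoint W V.ker)
    (hUd : finrank F U = d + 1) (hWd : finrank F W = d + 1) {e : E} (heU : e ∈ U) (heW : e ∈ W)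
    (heK : e ∉ V.ker) : ∃ g : E ≃ₗ[F] E, V.IsIsometry g ∧ U.map (g : E →ₗ[F] E) = W := by
  have he := hW.Q_eq_zero heW
  obtain ⟨f, hf, hef⟩ := V.exists_om_eq_one he heK
  have hPH := isCompl_orthogonal_pair he hf hef
  have horth : ∀ h ∈ span F {e, f}, ∀ p ∈ V.orthogonal {e, f}, V.om h p = 0 :=
    fun _ hh _ hp => V.om_eq_zero_of_mem_span hp hh
  obtain ⟨g, hg, hgUW⟩ := ih (V.orthogonal {e, f}) _ _ (hU.comap_subtype _) (hW.comap_subtype _)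
    (disjoint_ker_restrict_comap horth hPH.sup_eq_top hUK)
    (disjoint_ker_restrict_comap horth hPH.sup_eq_top hWK)
    (by have := finrank_comap_orthogonal_pair_add_one he hf hef hU heU; omega)
    (by have := finrank_comap_orthogonal_pair_add_one he hf hef hW heW; omega)
  obtain ⟨G, hG, hGP, hGH⟩ := exists_isIsometry_extend horth hPH g hg
  refine ⟨G, hG, eq_of_le_of_finrank_eq ?_ (by rw [LinearEquiv.finrank_map_eq, hUd, hWd])⟩
  rintro _ ⟨x, hx, rfl⟩
  obtain ⟨hpU, hpP⟩ := sub_smul_mem_orthogonal_pair he hf hef hU heU hx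
  set c := V.σ V.ε * V.om f x
  have hgp : (g ⟨_, hpP⟩ : E) ∈ W := by
    have := mem_map_of_mem (f := g.toLinearMap) (p := U.comap (V.orthogonal {e, f}).subtype)
      (r := ⟨_, hpP⟩) hpU
    rwa [hgUW] at this
  rw [LinearEquiv.coe_coe, ← sub_add_cancel x (c • e), map_add, hGP ⟨_, hpP⟩,
    hGH _ (smul_mem _ _ (subset_span (by simp)))]
  exact W.add_mem hgp (W.smul_mem c heW)

theorem transitiveOnIsotropic_succ [FiniteDimensional F E] {d : ℕ}
    (ih : ∀ P : Submodule F E, (V.restrict P).TransitiveOnIsotropic d) :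
    V.TransitiveOnIsotropic (d + 1) := by
  intro U W hU hW hUK hWK hUd hWd
  obtain ⟨u, hu, hu0⟩ := exists_mem_ne_zero_of_ne_bot (p := U) (by rintro rfl; simp at hUd)
  obtain ⟨e, heW, he0⟩ := exists_mem_ne_zero_of_ne_bot (p := W) (by rintro rfl; simp at hWd)
  have heK : e ∉ V.ker := fun h => he0 (disjoint_def.mp hWK e heW h)
  obtain ⟨g₁, hg₁, hg₁u⟩ := V.exists_isIsometry_apply_eq (hU.Q_eq_zero hu) (hW.Q_eq_zero heW)
    (fun h => hu0 (disjoint_def.mp hUK u hu h)) heK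
  obtain ⟨g₂, hg₂, hg₂U⟩ := V.exists_isIsometry_map_eq_of_mem ih (hU.map hg₁) hW
    (disjoint_ker_map hUK hg₁) hWK (by rwa [LinearEquiv.finrank_map_eq]) hWd
    ⟨u, hu, hg₁u⟩ heW heK
  exact ⟨g₁.trans g₂, hg₁.trans hg₂, by rw [LinearEquiv.coe_trans, map_comp, hg₂U]⟩

theorem transitiveOnIsotropic [FiniteDimensional F E] (d : ℕ) : V.TransitiveOnIsotropic d := by
  induction d generalizing E with
  | zero => exact V.transitiveOnIsotropic_zero
  | succ d ih => exact V.transitiveOnIsotropic_succ fun P => ih (V.restrict P)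

def rad : Submodule F E where
  carrier := {v | v ∈ V.ker ∧ V.Q v = 0}
  add_mem' hv hw := ⟨V.ker.add_mem hv.1 hw.1, by rw [V.Q_add_of_om_eq_zero (hv.1 _), hv.2, hw.2,
    add_zero]⟩
  zero_mem' := ⟨V.ker.zero_mem, by simp [Q, by simpa using V.q_smul_left 0 0 0]⟩
  smul_mem' a _ hv := ⟨V.ker.smul_mem a hv.1, V.Q_smul_eq_zero a hv.2⟩

theorem mem_rad {v : E} : v ∈ V.rad ↔ v ∈ V.ker ∧ V.Q v = 0 := Iff.rfl

theorem IsIsometry.map_rad_le {V : FormedSpace F E} {g : E ≃ₗ[F] E} (hg : V.IsIsometry g) :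
    V.rad.map (g : E →ₗ[F] E) ≤ V.rad := by
  rintro _ ⟨v, hv, rfl⟩
  exact ⟨hg.apply_mem_ker_iff.mpr hv.1, (hg.Q_apply v).trans hv.2⟩

theorem isIsometry_restrict_rad (g : V.rad ≃ₗ[F] V.rad) : (V.restrict V.rad).IsIsometry g :=
  ⟨fun v w => by rw [restrict_om, restrict_om, (g w).2.1, w.2.1],
    fun v => by rw [restrict_Q, restrict_Q, (g v).2.2, v.2.2]⟩

/-- Any linear automorphism of `R(E)`, extended by the identity on a complement, is an isometry. -/
theorem exists_isIsometry_map_eq_of_le_rad [FiniteDimensional F E] {S A B : Submodule F E}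
    (hS : IsCompl V.rad S) (hA : A ≤ V.rad) (hB : B ≤ V.rad) (hAB : finrank F A = finrank F B) :
    ∃ g : E ≃ₗ[F] E, V.IsIsometry g ∧ A.map (g : E →ₗ[F] E) = B ∧ ∀ s ∈ S, g s = s := by
  obtain ⟨h, hh⟩ := exists_linearEquiv_map_eq (A := A.comap V.rad.subtype)
    (B := B.comap V.rad.subtype) (by
      rwa [(comapSubtypeEquivOfLe hA).finrank_eq, (comapSubtypeEquivOfLe hB).finrank_eq])
  obtain ⟨G, hG, hGR, hGS⟩ := exists_isIsometry_extend (fun s _ r hr => (V.mem_rad.mp hr).1 s) hS h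
    (V.isIsometry_restrict_rad h)
  refine ⟨G, hG, eq_of_le_of_finrank_eq ?_ (by rw [LinearEquiv.finrank_map_eq, hAB]), hGS⟩
  rintro _ ⟨a, ha, rfl⟩
  have := mem_map_of_mem (f := h.toLinearMap) (p := A.comap V.rad.subtype) (r := ⟨a, hA ha⟩) ha
  rw [hh] at this
  rwa [LinearEquiv.coe_coe, hGR ⟨a, hA ha⟩]

theorem exists_disjoint_ker_sup_eq [FiniteDimensional F E] {U : Submodule F E}
    (hU : V.Isotropic U) :
    ∃ U₁ : Submodule F E, Disjoint U₁ V.rad ∧ Disjoint U₁ V.ker ∧ U ⊓ V.rad ⊔ U₁ = U ∧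
      finrank F ↥(U ⊓ V.rad) + finrank F U₁ = finrank F U := by
  obtain ⟨U₁, hd, hsup⟩ := IsModularLattice.exists_disjoint_and_sup_eq (inf_le_left : U ⊓ V.rad ≤ U)
  have hU₁U : U₁ ≤ U := hsup ▸ le_sup_right
  have hU₁R : Disjoint U₁ V.rad := disjoint_def.mpr fun v hv hvR =>
    disjoint_def.mp hd v ⟨hU₁U hv, hvR⟩ hv
  refine ⟨U₁, hU₁R, disjoint_def.mpr fun v hv hvK => disjoint_def.mp hU₁R v hv
    ⟨hvK, hU.Q_eq_zero (hU₁U hv)⟩, hsup, ?_⟩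
  have := finrank_sup_add_finrank_inf_eq (U ⊓ V.rad) U₁
  rw [hsup, hd.eq_bot, finrank_bot] at this
  omega

theorem exists_isIsometry_map_eq [FiniteDimensional F E] {U W : Submodule F E}
    (hU : V.Isotropic U) (hW : V.Isotropic W) (hUW : finrank F U = finrank F W)
    (hUWR : finrank F ↥(U ⊓ V.rad) = finrank F ↥(W ⊓ V.rad)) :
    ∃ g : E ≃ₗ[F] E, V.IsIsometry g ∧ U.map (g : E →ₗ[F] E) = W := by
  obtain ⟨U₁, -, hU₁K, hU₁, hU₁d⟩ := V.exists_disjoint_ker_sup_eq hU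
  obtain ⟨W₁, hW₁R, hW₁K, hW₁, hW₁d⟩ := V.exists_disjoint_ker_sup_eq hW
  obtain ⟨g₁, hg₁, hg₁U⟩ := V.transitiveOnIsotropic _ U₁ W₁ (hU.mono (hU₁ ▸ le_sup_right))
    (hW.mono (hW₁ ▸ le_sup_right)) hU₁K hW₁K rfl (by omega)
  obtain ⟨S, hW₁S, hS⟩ := hW₁R.exists_isCompl
  obtain ⟨g₂, hg₂, hg₂U, hg₂S⟩ := V.exists_isIsometry_map_eq_of_le_rad (B := W ⊓ V.rad) hS.symm
    ((map_mono inf_le_right).trans hg₁.map_rad_le) inf_le_right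
    (by rw [LinearEquiv.finrank_map_eq, hUWR])
  have hg₂W : W₁.map (g₂ : E →ₗ[F] E) = W₁ :=
    le_antisymm (by rintro _ ⟨w, hw, rfl⟩; rwa [LinearEquiv.coe_coe, hg₂S w (hW₁S hw)])
      fun w hw => ⟨w, hw, hg₂S w (hW₁S hw)⟩
  refine ⟨g₁.trans g₂, hg₁.trans hg₂, ?_⟩
  rw [LinearEquiv.coe_trans, map_comp, ← hU₁, Submodule.map_sup, hg₁U, Submodule.map_sup, hg₂U,
    hg₂W, hW₁]

end FormedSpace

/-- The largest subgroup of `Λ` stable under `t ↦ a σ(a) t`. -/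
def normCore {F : Type*} [Field F] (σ : F →+* F) (Λ : AddSubgroup F) : AddSubgroup F where
  carrier := {t | ∀ a, a * σ a * t ∈ Λ}
  add_mem' hs ht a := by rw [mul_add]; exact Λ.add_mem (hs a) (ht a)
  zero_mem' a := by rw [mul_zero]; exact Λ.zero_mem
  neg_mem' ht a := by rw [mul_neg]; exact Λ.neg_mem (ht a)

theorem normCore_le {F : Type*} [Field F] (σ : F →+* F) (Λ : AddSubgroup F) :
    normCore σ Λ ≤ Λ := fun t ht => by simpa using ht 1

theorem q_self_mem_normCore {F E : Type*} [Field F] [AddCommGroup E] [Module F E]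
    {σ : F →+* F} {Λ : AddSubgroup F} {q : E → E → F} (hq : IsSesq σ q) {v : E}
    (h : ∀ a : F, q (a • v) (a • v) ∈ Λ) : q v v ∈ normCore σ Λ := fun a => by
  simpa only [hq.2.2, mul_comm _ a, ← mul_assoc] using h a

def FormedSpace.ofNormCore {F E : Type*} [Field F] [AddCommGroup E] [Module F E]
    (σ : F →+* F) (hσ : ∀ a : F, σ (σ a) = a) (ε : F) (hε : ε * σ ε = 1) (Λ : AddSubgroup F)
    (hmin : ∀ a : F, a - ε * σ a ∈ Λ) (hmax : ∀ a ∈ Λ, a + ε * σ a = 0)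
    (q : E → E → F) (hq : IsSesq σ q) : FormedSpace F E where
  σ := σ
  σ_σ := hσ
  ε := ε
  ε_mul_σ_ε := hε
  Λ := normCore σ Λ
  sub_mem_Λ a c := by
    have : c * σ c * (a - ε * σ a) = c * σ c * a - ε * σ (c * σ c * a) := by
      rw [map_mul, map_mul, hσ]; ring
    rw [this]; exact hmin _
  add_eq_zero_of_mem_Λ a ha := hmax a (normCore_le σ Λ ha)
  norm_mul_mem_Λ a t ht c := by
    have : c * σ c * (a * σ a * t) = (c * a) * σ (c * a) * t := by rw [map_mul]; ring
    rw [this]; exact ht (c * a)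
  q := q
  isSesq := hq

/-- The group of bijective isometries of a formed space `(E,q)` acts transitively on
isotropic subspaces with given dimension and given dimension of intersection with the
radical `R(E)`: if `U`, `W` are isotropic with `dim U = dim W` and
`dim (U ∩ R(E)) = dim (W ∩ R(E))`, there is a bijective isometry `g` with `g(U) = W`. -/
theorem stmt11 {F E : Type*} [Field F] [AddCommGroup E] [Module F E]
    [FiniteDimensional F E]
    (σ : F →+* F) (hσ : ∀ a : F, σ (σ a) = a)
    (ε : F) (hε : ε * σ ε = 1)
    (Λ : AddSubgroup F)
    (hmin : ∀ a : F, a - ε * σ a ∈ Λ)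
    (hmax : ∀ a ∈ Λ, a + ε * σ a = 0)
    (q : E → E → F) (hq : IsSesq σ q)
    (R : Submodule F E) (hR : (R : Set E) = radSet σ ε q (Λ : Set F))
    (U W : Submodule F E)
    (hU : IsIsotropic σ ε q (Λ : Set F) U) (hW : IsIsotropic σ ε q (Λ : Set F) W)
    (hdim : Module.finrank F U = Module.finrank F W)
    (hdimR : Module.finrank F ↥(U ⊓ R) = Module.finrank F ↥(W ⊓ R)) :
    ∃ g : E ≃ₗ[F] E,
      (∀ v v' : E, omegaF σ ε q (g v) (g v') = omegaF σ ε q v v') ∧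
      (∀ v : E, q (g v) (g v) - q v v ∈ Λ) ∧
      Submodule.map g.toLinearMap U = W := by
  set V := FormedSpace.ofNormCore σ hσ ε hε Λ hmin hmax q hq
  have isotropic {X : Submodule F E} (hX : IsIsotropic σ ε q Λ X) : V.Isotropic X :=
    ⟨hX.1, fun u hu => q_self_mem_normCore hq fun a => hX.2 _ (X.smul_mem a hu)⟩
  have hRV : R = V.rad := by
    have hmem (w : E) : w ∈ R ↔ w ∈ radSet σ ε q Λ := Set.ext_iff.mp hR w
    ext v
    refine ⟨fun hv => ⟨((hmem v).mp hv).1, V.Q_eq_zero_iff.mpr ?_⟩, fun hv => (hmem v).mpr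
      ⟨hv.1, normCore_le σ Λ (V.Q_eq_zero_iff.mp hv.2)⟩⟩
    exact q_self_mem_normCore hq fun a => ((hmem _).mp (R.smul_mem a hv)).2
  obtain ⟨g, hg, hgU⟩ := V.exists_isIsometry_map_eq (isotropic hU) (isotropic hW) hdim
    (hRV ▸ hdimR)
  exact ⟨g, hg.om_apply_apply, fun v => normCore_le σ Λ (V.Q_eq_Q_iff.mp (hg.Q_apply v)), hgU⟩
end

section
/- Let (E,q) be a formed space and U, W ≤ E subspaces such that U is isotropic and W + U^⊥ = E. Then U ∩ W^⊥ ≤ R(E). In particular, if W is also isotropic, then U ∩ W ≤ R(E). -/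
/-- The orthogonal complement of a set `S ⊆ E`: `{v : ω_q(v,u) = 0 for all u ∈ S}`. -/
def perpSet {F E : Type*} [Field F] [AddCommGroup E] [Module F E]
    (σ : F →+* F) (ε : F) (q : E → E → F) (S : Set E) : Set E :=
  {v : E | ∀ u ∈ S, omegaF σ ε q v u = 0}

section FormedSpace

variable {F E : Type*} [Field F] [AddCommGroup E] [Module F E]
  {σ : F →+* F} {ε : F} {q : E → E → F}

theorem omegaF_swap (hσ : ∀ a : F, σ (σ a) = a) (hε : ε * σ ε = 1) (v w : E) :
    omegaF σ ε q w v = ε * σ (omegaF σ ε q v w) := by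
  simp only [omegaF, map_add, map_mul, mul_add, hσ]
  rw [← mul_assoc, hε, one_mul, add_comm]

theorem omegaF_add_left (hq : IsSesq σ q) (w p v : E) :
    omegaF σ ε q (w + p) v = omegaF σ ε q w v + omegaF σ ε q p v := by
  simp only [omegaF, hq.1, hq.2.1, map_add]
  ring

theorem omegaF_eq_zero_of_mem_perpSet (hσ : ∀ a : F, σ (σ a) = a) (hε : ε * σ ε = 1)
    {S : Set E} {v w : E} (hv : v ∈ perpSet σ ε q S) (hw : w ∈ S) :
    omegaF σ ε q w v = 0 := by
  rw [omegaF_swap hσ hε, hv w hw, map_zero, mul_zero]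

theorem IsIsotropic.le_perpSet {Λ : Set F} {W : Submodule F E} (hW : IsIsotropic σ ε q Λ W) :
    (W : Set E) ⊆ perpSet σ ε q W :=
  fun w hw u hu => hW.1 w hw u hu

theorem mem_radSet_of_mem_perpSet (hσ : ∀ a : F, σ (σ a) = a) (hε : ε * σ ε = 1)
    (hq : IsSesq σ q) {Λ : Set F} {U W : Set E}
    (hsum : ∀ v : E, ∃ w ∈ W, ∃ p ∈ perpSet σ ε q U, v = w + p)
    {v : E} (hvU : v ∈ U) (hvW : v ∈ perpSet σ ε q W) (hvv : q v v ∈ Λ) :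
    v ∈ radSet σ ε q Λ := by
  refine ⟨fun x => ?_, hvv⟩
  obtain ⟨w, hw, p, hp, rfl⟩ := hsum x
  rw [omegaF_add_left hq, omegaF_eq_zero_of_mem_perpSet hσ hε hvW hw, hp v hvU, add_zero]

end FormedSpace

theorem stmt16_general {F E : Type*} [Field F] [AddCommGroup E] [Module F E]
    (σ : F →+* F) (hσ : ∀ a : F, σ (σ a) = a)
    (ε : F) (hε : ε * σ ε = 1)
    (Λ : AddSubgroup F)
    (q : E → E → F) (hq : IsSesq σ q)
    (U W : Submodule F E)
    (hU : IsIsotropic σ ε q (Λ : Set F) U)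
    (hsum : ∀ v : E, ∃ w ∈ W, ∃ p ∈ perpSet σ ε q (U : Set E), v = w + p) :
    (∀ v ∈ U, v ∈ perpSet σ ε q (W : Set E) → v ∈ radSet σ ε q (Λ : Set F)) ∧
    (IsIsotropic σ ε q (Λ : Set F) W →
      ∀ v ∈ U, v ∈ W → v ∈ radSet σ ε q (Λ : Set F)) := by
  have mem_rad : ∀ v ∈ U, v ∈ perpSet σ ε q (W : Set E) → v ∈ radSet σ ε q (Λ : Set F) :=
    fun v hvU hvW => mem_radSet_of_mem_perpSet hσ hε hq hsum hvU hvW (hU.2 v hvU)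
  exact ⟨mem_rad, fun hW v hvU hvW => mem_rad v hvU (hW.le_perpSet hvW)⟩

/-- Let `(E,q)` be a formed space and `U, W ≤ E` subspaces with `U` isotropic and
`W + U^⊥ = E`. Then `U ∩ W^⊥ ≤ R(E)`. In particular, if `W` is also isotropic,
then `U ∩ W ≤ R(E)`. -/
theorem stmt16 {F E : Type*} [Field F] [AddCommGroup E] [Module F E]
    [FiniteDimensional F E]
    (σ : F →+* F) (hσ : ∀ a : F, σ (σ a) = a)
    (ε : F) (hε : ε * σ ε = 1)
    (Λ : AddSubgroup F)
    (hmin : ∀ a : F, a - ε * σ a ∈ Λ)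
    (hmax : ∀ a ∈ Λ, a + ε * σ a = 0)
    (q : E → E → F) (hq : IsSesq σ q)
    (U W : Submodule F E)
    (hU : IsIsotropic σ ε q (Λ : Set F) U)
    (hsum : ∀ v : E, ∃ w ∈ W, ∃ p ∈ perpSet σ ε q (U : Set E), v = w + p) :
    (∀ v ∈ U, v ∈ perpSet σ ε q (W : Set E) → v ∈ radSet σ ε q (Λ : Set F)) ∧
    (IsIsotropic σ ε q (Λ : Set F) W →
      ∀ v ∈ U, v ∈ W → v ∈ radSet σ ε q (Λ : Set F)) :=
  stmt16_general σ hσ ε hε Λ q hq U W hU hsum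
end
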